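/- Let F(w) = P(w) + R(w) where P(w) = (1/n) sum_{i=1}^n psi_i(w), each psi_i convex and differentiable with L_i-Lipschitz gradient, and R convex (possibly nonsmooth). Let L = max_i L_i and let w* minimize F. Then (1/n) sum_{i=1}^n ||nabla psi_i(w) - nabla psi_i(w*)||^2 <= 2L (F(w) - F(w*)) for all w. -/

import Mathlib

/-!
For a convex `f` with `L`-Lipschitz gradient, `f - ⟪∇f y, ·⟫` is minimised at `y`, and the descent
lemma shows that the gradient step `x - L⁻¹ • (∇f x - ∇f y)` lowers it by `‖∇f x - ∇f y‖² / (2L)`.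
This gives the Bregman cocoercivity bound
`‖∇ψᵢ w - ∇ψᵢ w⋆‖² ≤ 2L (ψᵢ w - ψᵢ w⋆ - ⟪∇ψᵢ w⋆, w - w⋆⟫)` for every summand. Averaging over `i`
leaves `-⟪∇P w⋆, w - w⋆⟫`, which the first-order optimality of `w⋆` for `P + R`, with `R` convex,
bounds by `R w - R w⋆`.
-/

open scoped RealInnerProductSpace
open Set

theorem ConvexOn.map_add_smul_sub_le {V : Type*} [AddCommGroup V] [Module ℝ V] {f : V → ℝ}
    (hf : ConvexOn ℝ univ f) (x y : V) {t : ℝ} (ht₀ : 0 ≤ t) (ht₁ : t ≤ 1) :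
    f (x + t • (y - x)) ≤ f x + t * (f y - f x) := by
  have hcomb : (1 - t) • x + t • y = x + t • (y - x) := by
    rw [smul_sub, sub_smul, one_smul]; abel
  have := hf.2 (mem_univ x) (mem_univ y) (sub_nonneg.2 ht₁) ht₀ (sub_add_cancel 1 t)
  rw [hcomb, smul_eq_mul, smul_eq_mul] at this
  linarith

section Gradient

variable {E : Type*} [NormedAddCommGroup E] [InnerProductSpace ℝ E] [CompleteSpace E]

theorem HasGradientAt.hasDerivAt_comp_add_smul {f : E → ℝ} {g x v : E} {t : ℝ}
    (hf : HasGradientAt f g (x + t • v)) :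
    HasDerivAt (fun s : ℝ => f (x + s • v)) ⟪g, v⟫ t := by
  have hline : HasDerivAt (fun s : ℝ => x + s • v) v t := by
    simpa using ((hasDerivAt_id t).smul_const v).const_add x
  have h := (hasGradientAt_iff_hasFDerivAt.mp hf).comp_hasDerivAt t hline
  simp only [InnerProductSpace.toDual_apply_apply] at h
  exact h

theorem HasGradientAt.neg {f : E → ℝ} {g x : E} (hf : HasGradientAt f g x) :
    HasGradientAt (fun y => -f y) (-g) x := by
  rw [hasGradientAt_iff_hasFDerivAt, map_neg]
  exact (hasGradientAt_iff_hasFDerivAt.mp hf).neg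

theorem HasGradientAt.sub_inner {f : E → ℝ} {g x : E} (hf : HasGradientAt f g x) (a : E) :
    HasGradientAt (fun y => f y - ⟪a, y⟫) (g - a) x := by
  rw [hasGradientAt_iff_hasFDerivAt, map_sub]
  exact (hasGradientAt_iff_hasFDerivAt.mp hf).sub (InnerProductSpace.toDual ℝ E a).hasFDerivAt

theorem HasGradientAt.const_mul_sum {ι : Type*} (s : Finset ι) (c : ℝ) {f : ι → E → ℝ}
    {g : ι → E} {x : E} (hf : ∀ i ∈ s, HasGradientAt (f i) (g i) x) :
    HasGradientAt (fun y => c * ∑ i ∈ s, f i y) (c • ∑ i ∈ s, g i) x := by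
  rw [hasGradientAt_iff_hasFDerivAt, map_smul, map_sum]
  exact (HasFDerivAt.fun_sum fun i hi => hasGradientAt_iff_hasFDerivAt.mp (hf i hi)).const_mul c

theorem HasGradientAt.inner_le_of_forall_sub_le {f : E → ℝ} {g x v : E} {c : ℝ}
    (hf : HasGradientAt f g x) (h : ∀ t ∈ Ioc (0 : ℝ) 1, f (x + t • v) - f x ≤ t * c) :
    ⟪g, v⟫ ≤ c := by
  have hslope := (HasGradientAt.hasDerivAt_comp_add_smul (t := 0) (v := v)
    (by simpa using hf)).tendsto_slope_zero_right
  refine le_of_tendsto hslope ?_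
  filter_upwards [Ioo_mem_nhdsGT one_pos] with t ht
  simpa [smul_eq_mul, inv_mul_le_iff₀ ht.1] using h t ⟨ht.1, ht.2.le⟩

theorem ConvexOn.add_inner_sub_le_of_hasGradientAt {f : E → ℝ} {g x : E}
    (hconv : ConvexOn ℝ univ f) (hf : HasGradientAt f g x) (y : E) :
    f x + ⟪g, y - x⟫ ≤ f y := by
  suffices ⟪g, y - x⟫ ≤ f y - f x by linarith
  refine hf.inner_le_of_forall_sub_le fun t ht => ?_
  linarith [hconv.map_add_smul_sub_le x y ht.1.le ht.2]

theorem sub_le_inner_of_forall_add_le {P R : E → ℝ} {g x : E} (hP : HasGradientAt P g x)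
    (hR : ConvexOn ℝ univ R) (hmin : ∀ y, P x + R x ≤ P y + R y) (y : E) :
    R x - R y ≤ ⟪g, y - x⟫ := by
  suffices ⟪-g, y - x⟫ ≤ R y - R x by rw [inner_neg_left] at this; linarith
  refine hP.neg.inner_le_of_forall_sub_le fun t ht => ?_
  linarith [hmin (x + t • (y - x)), hR.map_add_smul_sub_le x y ht.1.le ht.2]

theorem le_add_inner_add_mul_sq_of_gradient_lipschitz {f : E → ℝ} {f' : E → E} {L : ℝ}
    (hgrad : ∀ z, HasGradientAt f (f' z) z) (hlip : ∀ u v, ‖f' u - f' v‖ ≤ L * ‖u - v‖)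
    (x y : E) : f y ≤ f x + ⟪f' x, y - x⟫ + L / 2 * ‖y - x‖ ^ 2 := by
  set v := y - x
  set φ : ℝ → ℝ := fun t => f (x + t • v) - t * ⟪f' x, v⟫ - L / 2 * ‖v‖ ^ 2 * t ^ 2
  have hφ : ∀ t, HasDerivAt φ (⟪f' (x + t • v) - f' x, v⟫ - L * ‖v‖ ^ 2 * t) t := by
    intro t
    have := (((hgrad (x + t • v)).hasDerivAt_comp_add_smul).sub
      ((hasDerivAt_id t).mul_const ⟪f' x, v⟫)).sub ((hasDerivAt_pow 2 t).const_mul (L / 2 * ‖v‖ ^ 2))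
    exact this.congr_deriv (by rw [inner_sub_left]; ring)
  have hφ' : ∀ t ∈ interior (Ici (0 : ℝ)), ⟪f' (x + t • v) - f' x, v⟫ - L * ‖v‖ ^ 2 * t ≤ 0 := by
    intro t ht
    rw [interior_Ici] at ht
    suffices ⟪f' (x + t • v) - f' x, v⟫ ≤ L * ‖v‖ ^ 2 * t by linarith
    have hnorm : ‖(x + t • v) - x‖ = t * ‖v‖ := by
      rw [add_sub_cancel_left, norm_smul, Real.norm_of_nonneg (le_of_lt ht)]
    calc ⟪f' (x + t • v) - f' x, v⟫ ≤ ‖f' (x + t • v) - f' x‖ * ‖v‖ := real_inner_le_norm _ _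
      _ ≤ L * ‖(x + t • v) - x‖ * ‖v‖ := by gcongr; exact hlip _ _
      _ = L * ‖v‖ ^ 2 * t := by rw [hnorm]; ring
  have hanti := antitoneOn_of_hasDerivWithinAt_nonpos (convex_Ici 0)
    (fun t _ => (hφ t).continuousAt.continuousWithinAt) (fun t _ => (hφ t).hasDerivWithinAt) hφ'
  have := hanti (mem_Ici.2 le_rfl) (mem_Ici.2 zero_le_one) zero_le_one
  simp only [φ, v, zero_smul, add_zero, one_smul, add_sub_cancel, zero_mul, one_mul, sub_zero,
    one_pow] at this
  linarith

theorem norm_sq_gradient_le_of_forall_le {f : E → ℝ} {f' : E → E} {L m : ℝ} (hL : 0 < L)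
    (hgrad : ∀ z, HasGradientAt f (f' z) z) (hlip : ∀ u v, ‖f' u - f' v‖ ≤ L * ‖u - v‖)
    (hm : ∀ z, m ≤ f z) (x : E) : ‖f' x‖ ^ 2 ≤ 2 * L * (f x - m) := by
  set z := x - L⁻¹ • f' x
  have hz : z - x = -(L⁻¹ • f' x) := by simp [z]
  have hdescent : f z ≤ f x - ‖f' x‖ ^ 2 / (2 * L) := by
    have := le_add_inner_add_mul_sq_of_gradient_lipschitz hgrad hlip x z
    rw [hz, inner_neg_right, real_inner_smul_right, real_inner_self_eq_norm_sq, norm_neg,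
      norm_smul, Real.norm_of_nonneg (inv_nonneg.2 hL.le)] at this
    convert this using 1
    field_simp
    ring
  rw [← div_le_iff₀' (by positivity)]
  linarith [hm z]

theorem ConvexOn.norm_sub_gradient_sq_le {f : E → ℝ} {f' : E → E} {L : ℝ} (hL : 0 ≤ L)
    (hconv : ConvexOn ℝ univ f) (hgrad : ∀ z, HasGradientAt f (f' z) z)
    (hlip : ∀ u v, ‖f' u - f' v‖ ≤ L * ‖u - v‖) (x y : E) :
    ‖f' x - f' y‖ ^ 2 ≤ 2 * L * (f x - f y - ⟪f' y, x - y⟫) := by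
  rcases hL.eq_or_lt with rfl | hL
  · have := hlip x y
    rw [zero_mul] at this
    simp [norm_le_zero_iff.1 this]
  have hmin : ∀ z, f y - ⟪f' y, y⟫ ≤ f z - ⟪f' y, z⟫ := fun z => by
    have := hconv.add_inner_sub_le_of_hasGradientAt (hgrad y) z
    rw [inner_sub_right] at this
    linarith
  have := norm_sq_gradient_le_of_forall_le hL (fun z => (hgrad z).sub_inner (f' y))
    (fun u v => by simpa using hlip u v) hmin x
  rw [inner_sub_right]
  linarith

end Gradient

theorem stmt_2_general {d n : ℕ}
    (ψ : Fin n → EuclideanSpace ℝ (Fin d) → ℝ)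
    (ψ' : Fin n → EuclideanSpace ℝ (Fin d) → EuclideanSpace ℝ (Fin d))
    (Li : Fin n → ℝ) (L : ℝ)
    (hψconv : ∀ i, ConvexOn ℝ Set.univ (ψ i))
    (hψgrad : ∀ i w, HasGradientAt (ψ i) (ψ' i w) w)
    (hψlip : ∀ i u v, ‖ψ' i u - ψ' i v‖ ≤ Li i * ‖u - v‖)
    (hLmax : ∀ i, Li i ≤ L) (hLmem : ∃ i, L = Li i)
    (R : EuclideanSpace ℝ (Fin d) → ℝ) (hR : ConvexOn ℝ Set.univ R)
    (P : EuclideanSpace ℝ (Fin d) → ℝ)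
    (hP : ∀ w, P w = (n : ℝ)⁻¹ * ∑ i, ψ i w)
    (F : EuclideanSpace ℝ (Fin d) → ℝ)
    (hF : ∀ w, F w = P w + R w)
    (wstar : EuclideanSpace ℝ (Fin d)) (hmin : ∀ w, F wstar ≤ F w) :
    ∀ w, (n : ℝ)⁻¹ * ∑ i, ‖ψ' i w - ψ' i wstar‖ ^ 2 ≤ 2 * L * (F w - F wstar) := by
  intro w
  rcases eq_or_ne w wstar with rfl | hne
  · simp
  have hL : 0 ≤ L := by
    obtain ⟨i, rfl⟩ := hLmem
    refine nonneg_of_mul_nonneg_left ?_ (norm_pos_iff.2 (sub_ne_zero.2 hne))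
    exact (norm_nonneg _).trans (hψlip i w wstar)
  have hlip : ∀ i u v, ‖ψ' i u - ψ' i v‖ ≤ L * ‖u - v‖ := fun i u v =>
    (hψlip i u v).trans (by gcongr; exact hLmax i)
  have hPgrad : HasGradientAt P ((n : ℝ)⁻¹ • ∑ i, ψ' i wstar) wstar := by
    rw [funext hP]
    exact HasGradientAt.const_mul_sum _ _ fun i _ => hψgrad i wstar
  have hopt := sub_le_inner_of_forall_add_le hPgrad hR (fun y => by simpa [hF] using hmin y) w
  calc (n : ℝ)⁻¹ * ∑ i, ‖ψ' i w - ψ' i wstar‖ ^ 2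
      ≤ (n : ℝ)⁻¹ * ∑ i, 2 * L * (ψ i w - ψ i wstar - ⟪ψ' i wstar, w - wstar⟫) := by
        gcongr with i
        exact (hψconv i).norm_sub_gradient_sq_le hL (hψgrad i) (hlip i) w wstar
    _ = 2 * L * (P w - P wstar - ⟪(n : ℝ)⁻¹ • ∑ i, ψ' i wstar, w - wstar⟫) := by
        rw [hP, hP, real_inner_smul_left, sum_inner, ← Finset.mul_sum, Finset.sum_sub_distrib,
          Finset.sum_sub_distrib]
        ring
    _ ≤ 2 * L * (F w - F wstar) :=
        mul_le_mul_of_nonneg_left (by rw [hF, hF]; linarith) (by positivity)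

theorem stmt_2 {d n : ℕ} (hn : 0 < n)
    (ψ : Fin n → EuclideanSpace ℝ (Fin d) → ℝ)
    (ψ' : Fin n → EuclideanSpace ℝ (Fin d) → EuclideanSpace ℝ (Fin d))
    (Li : Fin n → ℝ) (L : ℝ)
    (hψconv : ∀ i, ConvexOn ℝ Set.univ (ψ i))
    (hψgrad : ∀ i w, HasGradientAt (ψ i) (ψ' i w) w)
    (hψlip : ∀ i u v, ‖ψ' i u - ψ' i v‖ ≤ Li i * ‖u - v‖)
    (hLmax : ∀ i, Li i ≤ L) (hLmem : ∃ i, L = Li i)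
    (R : EuclideanSpace ℝ (Fin d) → ℝ) (hR : ConvexOn ℝ Set.univ R)
    (P : EuclideanSpace ℝ (Fin d) → ℝ)
    (hP : ∀ w, P w = (n : ℝ)⁻¹ * ∑ i, ψ i w)
    (F : EuclideanSpace ℝ (Fin d) → ℝ)
    (hF : ∀ w, F w = P w + R w)
    (wstar : EuclideanSpace ℝ (Fin d)) (hmin : ∀ w, F wstar ≤ F w) :
    ∀ w, (n : ℝ)⁻¹ * ∑ i, ‖ψ' i w - ψ' i wstar‖ ^ 2 ≤ 2 * L * (F w - F wstar) :=
  stmt_2_general ψ ψ' Li L hψconv hψgrad hψlip hLmax hLmem R hR P hP F hF wstar hmin
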